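/- arXiv:0801.2051 — 2 statements merged into one kernel-verified Lean document; each statement's English description precedes it below -/
import Mathlib

section
/- Let X be an infinite-dimensional Banach space with r_X = inf{q : X has cotype q}, and Y any Banach space. If 1 < p < r_X* and q > 1/(1/p − 1/r_X*), then Π_{q;p}(X;Y) = L(X;Y): every bounded linear operator from X to Y is absolutely (q;p)-summing. -/
open scoped ENNReal NNReal
open Finset

noncomputable section

/-- The weak `p`-norm of a finite family `x` in `X`:
`sup_{‖φ‖ ≤ 1} (∑ j |φ (x j)|^p)^(1/p)`. -/
def weakNorm (p : ℝ) {X : Type*} [NormedAddCommGroup X] [NormedSpace ℝ X]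
    {m : ℕ} (x : Fin m → X) : ℝ :=
  ⨆ φ : {φ : X →L[ℝ] ℝ // ‖φ‖ ≤ 1}, (∑ j, |φ.1 (x j)| ^ p) ^ (1 / p)

/-- `C` is an absolutely `(q;p)`-summing bound for `u`. -/
def piBound (q p : ℝ) {X Y : Type*} [NormedAddCommGroup X] [NormedSpace ℝ X]
    [NormedAddCommGroup Y] [NormedSpace ℝ Y] (u : X →L[ℝ] Y) (C : ℝ) : Prop :=
  0 ≤ C ∧ ∀ (m : ℕ) (x : Fin m → X),
    (∑ j, ‖u (x j)‖ ^ q) ^ (1 / q) ≤ C * weakNorm p x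

/-- `u` is absolutely `(q;p)`-summing. -/
def IsSumming (q p : ℝ) {X Y : Type*} [NormedAddCommGroup X] [NormedSpace ℝ X]
    [NormedAddCommGroup Y] [NormedSpace ℝ Y] (u : X →L[ℝ] Y) : Prop :=
  ∃ C, piBound q p u C

/-- The `(q;p)`-summing norm `π_{q;p}(u)` (least summing bound). -/
def summingNorm (q p : ℝ) {X Y : Type*} [NormedAddCommGroup X] [NormedSpace ℝ X]
    [NormedAddCommGroup Y] [NormedSpace ℝ Y] (u : X →L[ℝ] Y) : ℝ :=
  sInf {C | piBound q p u C}

/-- `Y` has cotype `q`. -/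
def HasCotype (q : ℝ) (Y : Type*) [NormedAddCommGroup Y] [NormedSpace ℝ Y] : Prop :=
  ∃ C > 0, ∀ (m : ℕ) (y : Fin m → Y),
    (∑ j, ‖y j‖ ^ q) ^ (1 / q) ≤
      C * ((1 / 2 ^ m : ℝ) *
        ∑ ε : Fin m → Bool, ‖∑ j, (if ε j then (1 : ℝ) else -1) • y j‖ ^ 2) ^ (1 / 2 : ℝ)

/-- `Y` has no finite cotype. -/
def NoFiniteCotype (Y : Type*) [NormedAddCommGroup Y] [NormedSpace ℝ Y] : Prop :=
  ∀ q : ℝ, 2 ≤ q → ¬ HasCotype q Y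

/-- `Z` is finitely representable in `X`. -/
def FinRep (Z X : Type*) [NormedAddCommGroup Z] [NormedSpace ℝ Z]
    [NormedAddCommGroup X] [NormedSpace ℝ X] : Prop :=
  ∀ (F : Submodule ℝ Z), FiniteDimensional ℝ F → ∀ ε : ℝ, 0 < ε →
    ∃ (E : Submodule ℝ X) (T : F ≃L[ℝ] E),
      ‖(T : F →L[ℝ] E)‖ * ‖(T.symm : E →L[ℝ] F)‖ ≤ 1 + ε

/-- `r_X = inf {q : X has cotype q}`, as an extended nonnegative real
(`∞` if `X` has no finite cotype). -/
def cotypeInf (X : Type*) [NormedAddCommGroup X] [NormedSpace ℝ X] : ℝ≥0∞ :=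
  sInf {r : ℝ≥0∞ | ∃ q : ℝ, 2 ≤ q ∧ HasCotype q X ∧ r = ENNReal.ofReal q}

/-!
Choose a cotype `s` of `X` so close to `r_X` that `1 - 1/s ≤ 1/p - 1/q`. Cotype `s` makes the
identity of `X` `(s;1)`-summing, because every signed sum `∑ ±x j` is bounded by the weak
`ℓ¹`-norm of `x`. The inclusion theorem `Π_{s;1} ⊆ Π_{q;p}` then makes the identity, hence every
operator out of `X`, `(q;p)`-summing. The inclusion theorem itself is the classical rescaling
argument: weight `x j` by a power of `‖u (x j)‖` and estimate the weak norm by Hölder's inequality.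
-/

namespace Real

theorem Lq_le_Lp_of_le {ι : Type*} (s : Finset ι) (f : ι → ℝ) {p q : ℝ} (hp : 0 < p)
    (hpq : p ≤ q) :
    (∑ i ∈ s, |f i| ^ q) ^ (1 / q) ≤ (∑ i ∈ s, |f i| ^ p) ^ (1 / p) := by
  have hq : 0 < q := hp.trans_le hpq
  set A := (∑ i ∈ s, |f i| ^ p) ^ (1 / p) with hA_def
  have hsum_nonneg : 0 ≤ ∑ i ∈ s, |f i| ^ p := sum_nonneg fun i _ => by positivity
  have hA : 0 ≤ A := by positivity
  have hAp : A ^ p = ∑ i ∈ s, |f i| ^ p := by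
    rw [hA_def, one_div, rpow_inv_rpow hsum_nonneg hp.ne']
  have hle_A : ∀ i ∈ s, |f i| ≤ A := fun i hi =>
    (rpow_le_rpow_iff (abs_nonneg _) hA hp).1 <|
      hAp ▸ single_le_sum (f := fun j => |f j| ^ p) (fun j _ => by positivity) hi
  have hsum : ∑ i ∈ s, |f i| ^ q ≤ A ^ q := by
    have hsplit : q = p + (q - p) := by ring
    calc ∑ i ∈ s, |f i| ^ q = ∑ i ∈ s, |f i| ^ p * |f i| ^ (q - p) := by
          refine sum_congr rfl fun i _ => ?_
          rw [← rpow_add' (abs_nonneg _) (by linarith), ← hsplit]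
      _ ≤ ∑ i ∈ s, |f i| ^ p * A ^ (q - p) := by
          gcongr with i hi
          exact hle_A i hi
      _ = A ^ q := by
          rw [← sum_mul, ← hAp, ← rpow_add' hA (by linarith), ← hsplit]
  calc (∑ i ∈ s, |f i| ^ q) ^ (1 / q) ≤ (A ^ q) ^ (1 / q) := by gcongr
    _ = A := by rw [one_div, rpow_rpow_inv hA hq.ne']

end Real

section WeakNorm

variable {X : Type*} [NormedAddCommGroup X] [NormedSpace ℝ X] {m : ℕ}

theorem weakNorm_nonneg (p : ℝ) (x : Fin m → X) : 0 ≤ weakNorm p x :=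
  Real.iSup_nonneg fun _ => by positivity

theorem le_weakNorm {p : ℝ} (hp : 0 < p) (x : Fin m → X) {φ : X →L[ℝ] ℝ} (hφ : ‖φ‖ ≤ 1) :
    (∑ j, |φ (x j)| ^ p) ^ (1 / p) ≤ weakNorm p x := by
  refine le_ciSup (f := fun ψ : {ψ : X →L[ℝ] ℝ // ‖ψ‖ ≤ 1} => (∑ j, |ψ.1 (x j)| ^ p) ^ (1 / p))
    ⟨(∑ j, ‖x j‖ ^ p) ^ (1 / p), ?_⟩ ⟨φ, hφ⟩
  rintro _ ⟨ψ, rfl⟩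
  dsimp only
  gcongr with j
  exact (ψ.1.le_opNorm _).trans (mul_le_of_le_one_left (norm_nonneg _) ψ.2)

theorem weakNorm_smul_le {p₀ p₁ r : ℝ} (hr : r.HolderTriple p₁ p₀) (c : Fin m → ℝ)
    (x : Fin m → X) :
    weakNorm p₀ (fun j => c j • x j) ≤ (∑ j, |c j| ^ r) ^ (1 / r) * weakNorm p₁ x := by
  have hp₀ := hr.pos'
  have hp₁ := hr.right_pos
  have : Nonempty {φ : X →L[ℝ] ℝ // ‖φ‖ ≤ 1} := ⟨⟨0, by simp⟩⟩
  refine ciSup_le fun φ => ?_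
  have holder := Real.Lr_rpow_le_Lp_mul_Lq univ c (fun j => φ.1 (x j)) hr
  calc (∑ j, |φ.1 (c j • x j)| ^ p₀) ^ (1 / p₀)
      ≤ ((∑ j, |c j| ^ r) ^ (p₀ / r) * (∑ j, |φ.1 (x j)| ^ p₁) ^ (p₀ / p₁)) ^ (1 / p₀) := by
        simp only [map_smul, smul_eq_mul]
        gcongr
    _ = (∑ j, |c j| ^ r) ^ (1 / r) * (∑ j, |φ.1 (x j)| ^ p₁) ^ (1 / p₁) := by
        rw [Real.mul_rpow (by positivity) (by positivity), ← Real.rpow_mul (by positivity),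
          ← Real.rpow_mul (by positivity)]
        field_simp
    _ ≤ (∑ j, |c j| ^ r) ^ (1 / r) * weakNorm p₁ x := by
        gcongr
        exact le_weakNorm hp₁ x φ.2

theorem norm_sum_sign_smul_le_weakNorm_one (x : Fin m → X) (ε : Fin m → Bool) :
    ‖∑ j, (if ε j then (1 : ℝ) else -1) • x j‖ ≤ weakNorm 1 x := by
  obtain ⟨φ, hφ, hφv⟩ := exists_dual_vector'' ℝ (∑ j, (if ε j then (1 : ℝ) else -1) • x j)
  calc ‖∑ j, (if ε j then (1 : ℝ) else -1) • x j‖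
      = φ (∑ j, (if ε j then (1 : ℝ) else -1) • x j) := hφv.symm
    _ = ∑ j, (if ε j then (1 : ℝ) else -1) * φ (x j) := by
        simp only [map_sum, map_smul, smul_eq_mul]
    _ ≤ ∑ j, |φ (x j)| := by
        gcongr with j
        cases ε j <;> simp [neg_le_abs, le_abs_self]
    _ = (∑ j, |φ (x j)| ^ (1 : ℝ)) ^ (1 / (1 : ℝ)) := by simp
    _ ≤ weakNorm 1 x := le_weakNorm one_pos x hφ

end WeakNorm

section Summing

variable {X Y Z : Type*} [NormedAddCommGroup X] [NormedSpace ℝ X]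
  [NormedAddCommGroup Y] [NormedSpace ℝ Y] [NormedAddCommGroup Z] [NormedSpace ℝ Z]

theorem HasCotype.isSumming_id {s : ℝ} (h : HasCotype s X) :
    IsSumming s 1 (ContinuousLinearMap.id ℝ X) := by
  obtain ⟨C, hC, hcot⟩ := h
  refine ⟨C, hC.le, fun m x => (hcot m x).trans ?_⟩
  have hw := weakNorm_nonneg 1 x
  have hmean : (1 / 2 ^ m : ℝ) *
      ∑ ε : Fin m → Bool, ‖∑ j, (if ε j then (1 : ℝ) else -1) • x j‖ ^ 2 ≤ weakNorm 1 x ^ 2 :=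
    calc _ ≤ (1 / 2 ^ m : ℝ) * ∑ _ε : Fin m → Bool, weakNorm 1 x ^ 2 := by
          gcongr with ε
          exact norm_sum_sign_smul_le_weakNorm_one x ε
      _ = weakNorm 1 x ^ 2 := by simp
  gcongr
  calc _ ≤ (weakNorm 1 x ^ 2) ^ (1 / 2 : ℝ) := by gcongr
    _ = weakNorm 1 x := by
        rw [← Real.rpow_natCast, ← Real.rpow_mul hw]
        norm_num

theorem IsSumming.comp_left {q p : ℝ} (hq : 0 < q) {v : X →L[ℝ] Y} (hv : IsSumming q p v)
    (u : Y →L[ℝ] Z) : IsSumming q p (u.comp v) := by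
  obtain ⟨C, hC, hv⟩ := hv
  refine ⟨‖u‖ * C, by positivity, fun m x => ?_⟩
  calc (∑ j, ‖u (v (x j))‖ ^ q) ^ (1 / q) ≤ (∑ j, (‖u‖ * ‖v (x j)‖) ^ q) ^ (1 / q) := by
        gcongr with j
        exact u.le_opNorm _
    _ = ‖u‖ * (∑ j, ‖v (x j)‖ ^ q) ^ (1 / q) := by
        simp_rw [Real.mul_rpow (norm_nonneg u) (norm_nonneg _), ← mul_sum]
        rw [Real.mul_rpow (by positivity) (by positivity), one_div,
          Real.rpow_rpow_inv (norm_nonneg u) hq.ne']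
    _ ≤ ‖u‖ * (C * weakNorm p x) := by gcongr; exact hv m x
    _ = ‖u‖ * C * weakNorm p x := by ring

theorem IsSumming.mono_left {q q' p : ℝ} (hq : 0 < q) (hqq' : q ≤ q') {u : X →L[ℝ] Y}
    (hu : IsSumming q p u) : IsSumming q' p u := by
  obtain ⟨C, hC, hu⟩ := hu
  refine ⟨C, hC, fun m x => le_trans ?_ (hu m x)⟩
  simpa using Real.Lq_le_Lp_of_le univ (fun j => ‖u (x j)‖) hq hqq'

theorem IsSumming.of_holderTriple {p₀ p₁ q₀ q₁ r : ℝ} (hp : r.HolderTriple p₁ p₀)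
    (hq : r.HolderTriple q₁ q₀) {u : X →L[ℝ] Y} (hu : IsSumming q₀ p₀ u) :
    IsSumming q₁ p₁ u := by
  obtain ⟨C, hC, hu⟩ := hu
  refine ⟨C, hC, fun m x => ?_⟩
  obtain ⟨hr, hq₁, hq₀⟩ := hq.all_pos
  set S := ∑ j, ‖u (x j)‖ ^ q₁
  -- the weights `c j` are chosen so that both `∑ ‖u (c j • x j)‖ ^ q₀` and `∑ |c j| ^ r` equal `S`
  set c : Fin m → ℝ := fun j => ‖u (x j)‖ ^ (q₁ / r)
  have hc_pow : ∀ j, |c j| ^ r = ‖u (x j)‖ ^ q₁ := fun j => by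
    rw [abs_of_nonneg (by positivity), ← Real.rpow_mul (norm_nonneg _), div_mul_cancel₀ _ hr.ne']
  have hcu_pow : ∀ j, ‖u (c j • x j)‖ ^ q₀ = ‖u (x j)‖ ^ q₁ := fun j => by
    have hexp : (q₁ / r + 1) * q₀ = q₁ := by
      have := hq.inv_add_inv_eq_inv
      field_simp at this ⊢
      linarith
    rw [map_smul, norm_smul, Real.norm_of_nonneg (by positivity),
      ← Real.rpow_add_one' (norm_nonneg _) (by positivity), ← Real.rpow_mul (norm_nonneg _), hexp]
  have key : S ^ (1 / q₁) * S ^ (1 / r) ≤ C * weakNorm p₁ x * S ^ (1 / r) :=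
    calc S ^ (1 / q₁) * S ^ (1 / r) = (∑ j, ‖u (c j • x j)‖ ^ q₀) ^ (1 / q₀) := by
          rw [sum_congr rfl fun j _ => hcu_pow j, ← Real.rpow_add' (by positivity) (by positivity),
            add_comm, hq.one_div_add_one_div]
      _ ≤ C * weakNorm p₀ (fun j => c j • x j) := hu m _
      _ ≤ C * ((∑ j, |c j| ^ r) ^ (1 / r) * weakNorm p₁ x) := by
          gcongr
          exact weakNorm_smul_le hp c x
      _ = C * weakNorm p₁ x * S ^ (1 / r) := by
          rw [sum_congr rfl fun j _ => hc_pow j]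
          ring
  rcases (show 0 ≤ S by positivity).eq_or_lt with hS | hS
  · rw [← hS, Real.zero_rpow (by positivity)]
    exact mul_nonneg hC (weakNorm_nonneg p₁ x)
  · exact le_of_mul_le_mul_right key (Real.rpow_pos_of_pos hS _)

theorem IsSumming.mono_exponents {p₀ p₁ q₀ q₁ : ℝ} (hp₀ : 0 < p₀) (hp : p₀ < p₁) (hq₁ : 0 < q₁)
    (h : p₀⁻¹ - q₀⁻¹ ≤ p₁⁻¹ - q₁⁻¹) {u : X →L[ℝ] Y} (hu : IsSumming q₀ p₀ u) :
    IsSumming q₁ p₁ u := by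
  have hp_inv : p₁⁻¹ < p₀⁻¹ := inv_strictAnti₀ hp₀ hp
  have hq_inv : 0 < q₀⁻¹ - p₀⁻¹ + p₁⁻¹ := by linarith [inv_pos.2 hq₁]
  have hr : ((p₀⁻¹ - p₁⁻¹)⁻¹).HolderTriple p₁ p₀ :=
    ⟨by simp, inv_pos.2 (by linarith), hp₀.trans hp⟩
  have hq : ((p₀⁻¹ - p₁⁻¹)⁻¹).HolderTriple (q₀⁻¹ - p₀⁻¹ + p₁⁻¹)⁻¹ q₀ :=
    ⟨by rw [inv_inv, inv_inv]; ring, inv_pos.2 (by linarith), inv_pos.2 hq_inv⟩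
  exact (hu.of_holderTriple hr hq).mono_left (inv_pos.2 hq_inv)
    ((inv_le_comm₀ hq_inv hq₁).2 (by linarith))

end Summing

theorem exists_hasCotype_lt_inv {X : Type*} [NormedAddCommGroup X] [NormedSpace ℝ X] {c : ℝ}
    (h : ENNReal.ofReal c < (cotypeInf X)⁻¹) : ∃ s, HasCotype s X ∧ c < s⁻¹ := by
  rw [ENNReal.lt_inv_iff_lt_inv] at h
  obtain ⟨_, ⟨s, hs, hsX, rfl⟩, hlt⟩ := sInf_lt_iff.1 h
  refine ⟨s, hsX, ?_⟩
  rw [ENNReal.lt_inv_iff_lt_inv, ← ENNReal.ofReal_inv_of_pos (by linarith)] at hlt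
  exact (ENNReal.ofReal_lt_ofReal_iff'.1 hlt).1

theorem all_operators_summing_above_critical_exponent_general
    {X Y : Type*} [NormedAddCommGroup X] [NormedSpace ℝ X]
    [NormedAddCommGroup Y] [NormedSpace ℝ Y]
    (p q : ℝ) (hp : 1 < p)
    (hqgt : (ENNReal.ofReal q)⁻¹ + 1 < (ENNReal.ofReal p)⁻¹ + (cotypeInf X)⁻¹)
      -- `q > 1 / (1/p - 1/r_X*)`
    :
    ∀ u : X →L[ℝ] Y, IsSumming q p u := by
  intro u
  -- for `q ≤ 0` the left side of `hqgt` is `⊤`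
  have hq : 0 < q := by
    by_contra! hq
    simp [ENNReal.ofReal_of_nonpos hq] at hqgt
  have hp₀ : 0 < p := by linarith
  have hc : ENNReal.ofReal (q⁻¹ + 1 - p⁻¹) < (cotypeInf X)⁻¹ := by
    have hp_inv : p⁻¹ < 1 := inv_lt_one_of_one_lt₀ hp
    rw [ENNReal.ofReal_sub _ (by positivity)]
    refine ENNReal.sub_lt_of_lt_add (ENNReal.ofReal_le_ofReal (by linarith [inv_pos.2 hq])) ?_
    rwa [ENNReal.ofReal_add (by positivity) zero_le_one, ENNReal.ofReal_one,
      ENNReal.ofReal_inv_of_pos hq, ENNReal.ofReal_inv_of_pos hp₀, add_comm (cotypeInf X)⁻¹]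
  obtain ⟨s, hsX, hs⟩ := exists_hasCotype_lt_inv hc
  have hid : IsSumming q p (ContinuousLinearMap.id ℝ X) :=
    hsX.isSumming_id.mono_exponents one_pos hp hq (by rw [inv_one]; linarith)
  simpa using hid.comp_left hq u

theorem all_operators_summing_above_critical_exponent
    {X Y : Type*} [NormedAddCommGroup X] [NormedSpace ℝ X] [CompleteSpace X]
    [NormedAddCommGroup Y] [NormedSpace ℝ Y] [CompleteSpace Y]
    (hX : ¬ FiniteDimensional ℝ X)
    (p q : ℝ) (hp : 1 < p) (hpq : p ≤ q)
    (hplt : 1 < (ENNReal.ofReal p)⁻¹ + (cotypeInf X)⁻¹)  -- `p < r_X*`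
    (hqgt : (ENNReal.ofReal q)⁻¹ + 1 < (ENNReal.ofReal p)⁻¹ + (cotypeInf X)⁻¹)
      -- `q > 1 / (1/p - 1/r_X*)`
    :
    ∀ u : X →L[ℝ] Y, IsSumming q p u :=
  all_operators_summing_above_critical_exponent_general p q hp hqgt
end
end

section
/- Let X₁, X₂, Y be Banach spaces and p₁, p₂ ≥ 1. If every continuous bilinear map A : X₁ × X₂ → Y is (p₁,p₂)-dominated, then every continuous linear operator from X₁ to L(X₂;Y) is absolutely p₁-summing. -/
open scoped ENNReal NNReal
open Finset

noncomputable section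

/-- A sequence `x` in `X` is weakly `p`-summable. -/
def WeaklySummable (p : ℝ) {X : Type*} [NormedAddCommGroup X] [NormedSpace ℝ X]
    (x : ℕ → X) : Prop :=
  ∀ φ : X →L[ℝ] ℝ, Summable fun j => |φ (x j)| ^ p

/-- `u` is absolutely `p`-summing (sequential definition). -/
def SeqPSumming (p : ℝ) {X Y : Type*} [NormedAddCommGroup X] [NormedSpace ℝ X]
    [NormedAddCommGroup Y] [NormedSpace ℝ Y] (u : X →L[ℝ] Y) : Prop :=
  ∀ x : ℕ → X, WeaklySummable p x → Summable fun j => ‖u (x j)‖ ^ p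

/-- A continuous bilinear map `A : X₁ × X₂ → Y` is `(p₁,p₂)`-dominated, where
`1/q = 1/p₁ + 1/p₂`. -/
def Dominated (p₁ p₂ : ℝ) {X₁ X₂ Y : Type*}
    [NormedAddCommGroup X₁] [NormedSpace ℝ X₁]
    [NormedAddCommGroup X₂] [NormedSpace ℝ X₂]
    [NormedAddCommGroup Y] [NormedSpace ℝ Y]
    (A : X₁ →L[ℝ] X₂ →L[ℝ] Y) : Prop :=
  ∀ (x₁ : ℕ → X₁) (x₂ : ℕ → X₂), WeaklySummable p₁ x₁ → WeaklySummable p₂ x₂ →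
    Summable fun j => ‖A (x₁ j) (x₂ j)‖ ^ (1 / p₁ + 1 / p₂)⁻¹

/-!
Test `u` against the bilinear map `(x₁, x₂) ↦ u x₁ x₂`. Given a weakly `p₁`-summable `(x_j)`,
pick `z_j` in the unit ball with `‖u x_j‖ ≤ 2 ‖u x_j z_j‖`. For every nonnegative `a ∈ ℓ_{p₂}` the
sequence `(a_j z_j)` is weakly `p₂`-summable, so domination puts `(a_j ‖u x_j‖)_j` in `ℓ_q`,
`1/q = 1/p₁ + 1/p₂`. A converse Hölder inequality then gives `(‖u x_j‖)_j ∈ ℓ_{p₁}`: writing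
`c = ‖u x_j‖ ^ p₁`, it says that `L¹(c) ⊆ Lˢ(c)` with `s = q/p₂ < 1` forces `∑ c < ∞`. That is a
gliding hump: if `∑ c = ∞`, cut `ℕ` into consecutive blocks of `c`-mass
`σ_k ≥ ((k+1)²)^(s/(1-s))` and let `t = ((k+1)² σ_k)⁻¹` on the `k`-th block; then
`∑ c t = ∑ (k+1)⁻²` converges while every block contributes at least `1` to `∑ c tˢ`.
-/

section Blocks

variable {n : ℕ → ℕ}

theorem Finset.sum_range_eq_sum_sum_Ico {M : Type*} [AddCommMonoid M] (hn : Monotone n)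
    (hn0 : n 0 = 0) (f : ℕ → M) (N : ℕ) :
    ∑ j ∈ range (n N), f j = ∑ k ∈ range N, ∑ j ∈ Ico (n k) (n (k + 1)), f j := by
  induction N with
  | zero => simp [hn0]
  | succ N ih =>
    rw [sum_range_succ, ← ih, range_eq_Ico, range_eq_Ico,
      sum_Ico_consecutive f (Nat.zero_le _) (hn N.le_succ)]

theorem summable_iff_summable_sum_Ico {f : ℕ → ℝ} (hf : ∀ j, 0 ≤ f j) (hn : StrictMono n)
    (hn0 : n 0 = 0) :
    Summable f ↔ Summable fun k => ∑ j ∈ Ico (n k) (n (k + 1)), f j := by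
  have hblock : ∀ k, 0 ≤ ∑ j ∈ Ico (n k) (n (k + 1)), f j :=
    fun k => sum_nonneg fun j _ => hf j
  constructor
  · intro hs
    refine summable_of_sum_range_le (c := ∑' j, f j) hblock fun N => ?_
    rw [← sum_range_eq_sum_sum_Ico hn.monotone hn0]
    exact hs.sum_le_tsum _ fun j _ => hf j
  · intro hs
    refine summable_of_sum_range_le
      (c := ∑' k, ∑ j ∈ Ico (n k) (n (k + 1)), f j) hf fun N => ?_
    calc ∑ j ∈ range N, f j
        ≤ ∑ j ∈ range (n N), f j :=
          sum_le_sum_of_subset_of_nonneg (range_subset_range.2 hn.le_apply) fun j _ _ => hf j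
      _ = ∑ k ∈ range N, ∑ j ∈ Ico (n k) (n (k + 1)), f j :=
          sum_range_eq_sum_sum_Ico hn.monotone hn0 f N
      _ ≤ _ := hs.sum_le_tsum _ fun k _ => hblock k

open Filter in
theorem exists_strictMono_le_sum_Ico {c : ℕ → ℝ} (hc : ∀ j, 0 ≤ c j) (hcs : ¬ Summable c)
    (M : ℕ → ℝ) :
    ∃ n : ℕ → ℕ, StrictMono n ∧ n 0 = 0 ∧ ∀ k, M k ≤ ∑ j ∈ Ico (n k) (n (k + 1)), c j := by
  have hS := (not_summable_iff_tendsto_nat_atTop_of_nonneg hc).1 hcs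
  have hnext : ∀ m (A : ℝ), ∃ m', m < m' ∧ A ≤ ∑ j ∈ Ico m m', c j := by
    intro m A
    obtain ⟨m', hm'A, hmm'⟩ :=
      ((hS.eventually_ge_atTop (∑ j ∈ range m, c j + A)).and (eventually_gt_atTop m)).exists
    refine ⟨m', hmm', ?_⟩
    rw [sum_Ico_eq_sub _ hmm'.le]
    linarith
  choose next hlt hle using hnext
  let n : ℕ → ℕ := fun k => Nat.rec 0 (fun k nk => next nk (M k)) k
  exact ⟨n, strictMono_nat_of_lt_succ fun k => hlt _ _, rfl, fun k => hle _ _⟩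

def StrictMono.blockIndex (hn : StrictMono n) (j : ℕ) : ℕ :=
  Nat.find (⟨j, hn.le_apply.trans_lt (hn j.lt_succ_self)⟩ : ∃ k, j < n (k + 1))

theorem StrictMono.blockIndex_eq (hn : StrictMono n) {j k : ℕ} (hk : n k ≤ j) (hj : j < n (k + 1)) :
    hn.blockIndex j = k := by
  refine le_antisymm (Nat.find_le hj) (not_lt.1 fun hlt => ?_)
  have : j < n (hn.blockIndex j + 1) := Nat.find_spec (p := fun k => j < n (k + 1)) _
  exact (this.trans_le (hn.monotone hlt)).not_ge hk

theorem StrictMono.sum_Ico_mul_blockIndex (hn : StrictMono n) (f g : ℕ → ℝ) (k : ℕ) :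
    ∑ j ∈ Ico (n k) (n (k + 1)), f j * g (hn.blockIndex j) =
      (∑ j ∈ Ico (n k) (n (k + 1)), f j) * g k := by
  rw [sum_mul]
  refine sum_congr rfl fun j hj => ?_
  rw [mem_Ico] at hj
  rw [hn.blockIndex_eq hj.1 hj.2]

end Blocks

theorem one_le_mul_rpow_inv_mul {A σ s : ℝ} (hA : 0 < A) (hs : s < 1) (hσ : A ^ (s / (1 - s)) ≤ σ) :
    1 ≤ σ * (A * σ)⁻¹ ^ s := by
  have hσ_pos : 0 < σ := (Real.rpow_pos_of_pos hA _).trans_le hσ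
  have hAσ : A ^ s ≤ σ ^ (1 - s) :=
    calc A ^ s = (A ^ (s / (1 - s))) ^ (1 - s) := by
          rw [← Real.rpow_mul hA.le, div_mul_cancel₀ _ (sub_pos.2 hs).ne']
      _ ≤ σ ^ (1 - s) := Real.rpow_le_rpow (by positivity) hσ (sub_pos.2 hs).le
  have hσ_eq : σ * (A * σ)⁻¹ ^ s = σ ^ (1 - s) / A ^ s := by
    rw [Real.rpow_sub hσ_pos, Real.rpow_one, Real.inv_rpow (by positivity),
      Real.mul_rpow hA.le hσ_pos.le]
    field_simp
  rwa [hσ_eq, one_le_div (by positivity)]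

theorem summable_of_forall_summable_mul_rpow {c : ℕ → ℝ} (hc : ∀ j, 0 ≤ c j) {s : ℝ} (hs : s < 1)
    (H : ∀ t : ℕ → ℝ, (∀ j, 0 ≤ t j) → Summable (fun j => c j * t j) →
      Summable fun j => c j * t j ^ s) :
    Summable c := by
  by_contra hcs
  set A : ℕ → ℝ := fun k => ((k + 1 : ℕ) : ℝ) ^ 2
  obtain ⟨n, hn, hn0, hσ⟩ := exists_strictMono_le_sum_Ico hc hcs fun k => A k ^ (s / (1 - s))
  set σ : ℕ → ℝ := fun k => ∑ j ∈ Ico (n k) (n (k + 1)), c j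
  have hσ_pos : ∀ k, 0 < σ k := fun k => (Real.rpow_pos_of_pos (by positivity) _).trans_le (hσ k)
  set τ : ℕ → ℝ := fun k => (A k * σ k)⁻¹
  have hτ : ∀ k, 0 ≤ τ k := fun k => inv_nonneg.2 (mul_nonneg (by positivity) (hσ_pos _).le)
  set t : ℕ → ℝ := fun j => τ (hn.blockIndex j)
  have hct : Summable fun j => c j * t j := by
    rw [summable_iff_summable_sum_Ico (fun j => mul_nonneg (hc j) (hτ _)) hn hn0]
    simp only [hn.sum_Ico_mul_blockIndex c τ]
    change Summable fun k => σ k * τ k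
    have hστ : ∀ k, σ k * τ k = (A k)⁻¹ := fun k => by
      simp only [τ]
      field_simp [(hσ_pos k).ne']
    simpa only [hστ] using (summable_nat_add_iff 1).2 (Real.summable_nat_pow_inv.2 one_lt_two)
  have hcts : ¬ Summable fun j => c j * t j ^ s := by
    rw [summable_iff_summable_sum_Ico
      (fun j => mul_nonneg (hc j) (Real.rpow_nonneg (hτ _) _)) hn hn0]
    simp only [hn.sum_Ico_mul_blockIndex c (fun k => τ k ^ s)]
    intro hsum
    obtain ⟨k, hk⟩ := (hsum.tendsto_atTop_zero.eventually (gt_mem_nhds one_pos)).exists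
    exact (one_le_mul_rpow_inv_mul (by positivity) hs (hσ k)).not_gt hk
  exact hcts (H t (fun j => hτ _) hct)

theorem summable_rpow_of_forall_summable_mul_rpow {p₁ p₂ : ℝ} (hp₁ : 0 < p₁) (hp₂ : 0 < p₂)
    {b : ℕ → ℝ} (hb : ∀ j, 0 ≤ b j)
    (H : ∀ a : ℕ → ℝ, (∀ j, 0 ≤ a j) → Summable (fun j => a j ^ p₂) →
      Summable fun j => (a j * b j) ^ (1 / p₁ + 1 / p₂)⁻¹) :
    Summable fun j => b j ^ p₁ := by
  set q := (1 / p₁ + 1 / p₂)⁻¹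
  have hq : q / p₁ + q / p₂ = 1 := by
    simp only [q]
    field_simp
  have hqp₁ : 0 < q / p₁ := by positivity
  refine summable_of_forall_summable_mul_rpow (fun j => Real.rpow_nonneg (hb j) _)
    (s := q / p₂) (by linarith) fun t ht hct => ?_
  -- with `a = (b ^ p₁ * t) ^ (1 / p₂)` one gets `(a * b) ^ q = b ^ p₁ * t ^ (q / p₂)`
  have hct_nonneg : ∀ j, 0 ≤ b j ^ p₁ * t j :=
    fun j => mul_nonneg (Real.rpow_nonneg (hb j) _) (ht j)
  have hsum := H (fun j => (b j ^ p₁ * t j) ^ p₂⁻¹) (fun j => Real.rpow_nonneg (hct_nonneg j) _)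
    (by simpa only [Real.rpow_inv_rpow (hct_nonneg _) hp₂.ne'] using hct)
  refine hsum.congr fun j => ?_
  have hc := Real.rpow_nonneg (hb j) p₁
  rw [Real.mul_rpow (Real.rpow_nonneg (hct_nonneg j) _) (hb j), ← Real.rpow_mul (hct_nonneg j),
    Real.mul_rpow hc (ht j), inv_mul_eq_div]
  have hbq : b j ^ q = (b j ^ p₁) ^ (q / p₁) := by
    rw [← Real.rpow_mul (hb j), mul_div_cancel₀ _ hp₁.ne']
  rw [hbq, mul_right_comm, ← Real.rpow_add' hc (by rw [add_comm, hq]; exact one_ne_zero),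
    add_comm, hq, Real.rpow_one]

theorem ContinuousLinearMap.exists_norm_le_one_opNorm_le_two_mul {𝕜 E F : Type*}
    [DenselyNormedField 𝕜] [NormedAddCommGroup E] [NormedSpace 𝕜 E]
    [SeminormedAddCommGroup F] [NormedSpace 𝕜 F] (f : E →L[𝕜] F) :
    ∃ z : E, ‖z‖ ≤ 1 ∧ ‖f‖ ≤ 2 * ‖f z‖ := by
  rcases (norm_nonneg f).eq_or_lt with hf | hf
  · exact ⟨0, by simp, by simp [← hf]⟩
  · obtain ⟨z, hz, hfz⟩ := f.exists_lt_apply_of_lt_opNorm (half_lt_self hf)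
    exact ⟨z, hz.le, by linarith⟩

theorem weaklySummable_smul {X : Type*} [NormedAddCommGroup X] [NormedSpace ℝ X] {p : ℝ}
    (hp : 0 ≤ p) {a : ℕ → ℝ} (ha : ∀ j, 0 ≤ a j) (has : Summable fun j => a j ^ p)
    {z : ℕ → X} (hz : ∀ j, ‖z j‖ ≤ 1) :
    WeaklySummable p fun j => a j • z j := by
  intro φ
  refine .of_nonneg_of_le (fun j => by positivity) (fun j => ?_) (has.mul_left (‖φ‖ ^ p))
  have hφ : |φ (a j • z j)| ≤ ‖φ‖ * a j :=
    calc |φ (a j • z j)| ≤ ‖φ‖ * ‖a j • z j‖ := φ.le_opNorm _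
      _ = ‖φ‖ * (a j * ‖z j‖) := by rw [norm_smul, Real.norm_of_nonneg (ha j)]
      _ ≤ ‖φ‖ * a j := by gcongr; exact mul_le_of_le_one_right (ha j) (hz j)
  rw [← Real.mul_rpow (norm_nonneg φ) (ha j)]
  exact Real.rpow_le_rpow (abs_nonneg _) hφ hp

theorem linear_summing_of_all_bilinear_dominated_general
    {X₁ X₂ Y : Type*} [NormedAddCommGroup X₁] [NormedSpace ℝ X₁]
    [NormedAddCommGroup X₂] [NormedSpace ℝ X₂]
    [NormedAddCommGroup Y] [NormedSpace ℝ Y]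
    (p₁ p₂ : ℝ) (hp₁ : 1 ≤ p₁) (hp₂ : 1 ≤ p₂)
    (h : ∀ A : X₁ →L[ℝ] X₂ →L[ℝ] Y, Dominated p₁ p₂ A) :
    ∀ u : X₁ →L[ℝ] (X₂ →L[ℝ] Y), SeqPSumming p₁ u := by
  intro u x hx
  choose z hz_norm hz_norming using fun j => (u (x j)).exists_norm_le_one_opNorm_le_two_mul
  refine summable_rpow_of_forall_summable_mul_rpow (by linarith) (by linarith)
    (fun j => norm_nonneg _) fun a ha has => ?_
  have hdom := h u x (fun j => a j • z j) hx (weaklySummable_smul (by linarith) ha has hz_norm)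
  have hab : ∀ j, 0 ≤ a j * ‖u (x j)‖ := fun j => mul_nonneg (ha j) (norm_nonneg _)
  refine .of_nonneg_of_le (fun j => Real.rpow_nonneg (hab j) _) (fun j => ?_)
    (hdom.mul_left (2 ^ (1 / p₁ + 1 / p₂)⁻¹))
  rw [← Real.mul_rpow zero_le_two (norm_nonneg _)]
  refine Real.rpow_le_rpow (hab j) ?_ (by positivity)
  rw [map_smul, norm_smul, Real.norm_of_nonneg (ha j), mul_left_comm]
  exact mul_le_mul_of_nonneg_left (hz_norming j) (ha j)

theorem linear_summing_of_all_bilinear_dominated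
    {X₁ X₂ Y : Type*} [NormedAddCommGroup X₁] [NormedSpace ℝ X₁] [CompleteSpace X₁]
    [NormedAddCommGroup X₂] [NormedSpace ℝ X₂] [CompleteSpace X₂]
    [NormedAddCommGroup Y] [NormedSpace ℝ Y] [CompleteSpace Y]
    (p₁ p₂ : ℝ) (hp₁ : 1 ≤ p₁) (hp₂ : 1 ≤ p₂)
    (h : ∀ A : X₁ →L[ℝ] X₂ →L[ℝ] Y, Dominated p₁ p₂ A) :
    ∀ u : X₁ →L[ℝ] (X₂ →L[ℝ] Y), SeqPSumming p₁ u :=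
  linear_summing_of_all_bilinear_dominated_general p₁ p₂ hp₁ hp₂ h
end
end
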